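/- arXiv:2512.18936 — 5 statements merged into one kernel-verified Lean document; each statement's English description precedes it below -/
import Mathlib

section
/- For every s with Re s > 1, each of the three families ((1−p^{−s})^{−z})_p, ((1−p^{−2s})^{−w})_p and (G_p(s))_p (indexed by primes p) is multipliable, and ∑_{n≥1} 𝔣(n) n^{−s} = (∏_p (1−p^{−s})^{−z}) · (∏_p (1−p^{−2s})^{−w}) · (∏_p G_p(s)), where all complex powers are taken with the principal branch. -/
/-!
The fake `𝔣` is multiplicative and bounded by `1`, so for `Re s > 1` its Dirichlet series
converges absolutely and equals the Euler product `∏_p g(p^{-s})`. For `Re t > 1` the series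
`∑_p log (1 - p^{-t})` converges, hence every family `((1 - p^{-t})^c)_p` is multipliable;
as `1 - p^{-t} ≠ 0`, the factors `(1 - p^{-s})^{±z}` and `(1 - p^{-2s})^{±w}` cancel prime by
prime.
-/

open Complex

namespace Complex

lemma cpow_eq_exp_log_mul_of_cpow_ne_zero {x c : ℂ} (h : x ^ c ≠ 0) :
    x ^ c = exp (log x * c) := by
  rw [cpow_def] at h ⊢
  split_ifs at h ⊢ with hx hc
  · simp [hx, hc]
  · exact absurd rfl h
  · rfl

lemma multipliable_one_sub_cpow {ι : Type*} {f : ι → ℂ} (hf : Summable f) (c : ℂ) :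
    Multipliable fun i ↦ (1 - f i) ^ c := by
  by_cases! h : ∃ i, (1 - f i) ^ c = 0
  · exact multipliable_of_exists_eq_zero h
  · exact (hf.clog_one_sub.mul_right c).hasSum.cexp.multipliable.congr fun i ↦
      (cpow_eq_exp_log_mul_of_cpow_ne_zero (h i)).symm

lemma cpow_neg_mul_cpow_self {x : ℂ} (hx : x ≠ 0) (c : ℂ) : x ^ (-c) * x ^ c = 1 := by
  rw [← cpow_add _ _ hx, neg_add_cancel, cpow_zero]

end Complex

lemma Nat.Primes.summable_natCast_cpow_neg {t : ℂ} (ht : 1 < t.re) :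
    Summable fun p : Nat.Primes ↦ ((p : ℕ) : ℂ) ^ (-t) := by
  refine .of_norm <| (Nat.Primes.summable_rpow.mpr ?_).congr fun p ↦
    (norm_natCast_cpow_of_pos p.prop.pos _).symm
  rwa [neg_re, neg_lt_neg_iff]

section FakeMu

variable {M : Type*} [CommMonoidWithZero M] (ε : ℕ → M)

def fakeMu (n : ℕ) : M :=
  if n = 0 then 0 else n.factorization.prod fun _ k ↦ ε k

@[simp] lemma fakeMu_zero : fakeMu ε 0 = 0 := if_pos rfl

@[simp] lemma fakeMu_one : fakeMu ε 1 = 1 := by simp [fakeMu]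

lemma fakeMu_of_ne_zero {n : ℕ} (hn : n ≠ 0) :
    fakeMu ε n = ∏ p ∈ n.primeFactors, ε (n.factorization p) := by
  rw [fakeMu, if_neg hn, Nat.prod_factorization_eq_prod_primeFactors]

lemma fakeMu_mul_of_coprime {m n : ℕ} (hmn : m.Coprime n) :
    fakeMu ε (m * n) = fakeMu ε m * fakeMu ε n := by
  rcases eq_or_ne m 0 with rfl | hm
  · simp [(Nat.coprime_zero_left _).mp hmn]
  rcases eq_or_ne n 0 with rfl | hn
  · simp [(Nat.coprime_zero_right _).mp hmn]
  rw [fakeMu, fakeMu, fakeMu, if_neg (mul_ne_zero hm hn), if_neg hm, if_neg hn,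
    Nat.factorization_mul_of_coprime hmn,
    Finsupp.prod_add_index_of_disjoint hmn.disjoint_primeFactors]

lemma fakeMu_prime_pow (hε0 : ε 0 = 1) {p : ℕ} (hp : p.Prime) (k : ℕ) :
    fakeMu ε (p ^ k) = ε k := by
  rw [fakeMu, if_neg (pow_ne_zero _ hp.ne_zero), hp.factorization_pow,
    Finsupp.prod_single_index hε0]

end FakeMu

lemma norm_fakeMu_le_one {R : Type*} [NormedCommRing R] [NormOneClass R] {ε : ℕ → R}
    (hε : ∀ k, ‖ε k‖ ≤ 1) (n : ℕ) : ‖fakeMu ε n‖ ≤ 1 := by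
  rcases eq_or_ne n 0 with rfl | hn
  · simp
  rw [fakeMu_of_ne_zero ε hn]
  exact (Finset.norm_prod_le _ _).trans
    (Finset.prod_le_one (fun _ _ ↦ norm_nonneg _) fun _ _ ↦ hε _)

section DirichletSeries

variable {ε : ℕ → ℂ} {s : ℂ}

lemma summable_norm_fakeMu_mul_cpow (hε : ∀ k, ‖ε k‖ ≤ 1) (hs : 1 < s.re) :
    Summable fun n : ℕ ↦ ‖fakeMu ε n * (n : ℂ) ^ (-s)‖ := by
  refine (Real.summable_nat_rpow.mpr (neg_lt_neg hs)).of_nonneg_of_le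
    (fun _ ↦ norm_nonneg _) fun n ↦ ?_
  rcases eq_or_ne n 0 with rfl | hn
  · simpa using Real.rpow_nonneg le_rfl _
  rw [norm_mul, norm_natCast_cpow_of_pos (Nat.pos_of_ne_zero hn), neg_re]
  exact mul_le_of_le_one_left (by positivity) (norm_fakeMu_le_one hε n)

lemma hasProd_fakeMu_dirichletSeries (hε0 : ε 0 = 1) (hε : ∀ k, ‖ε k‖ ≤ 1)
    (hs : 1 < s.re) :
    HasProd (fun p : Nat.Primes ↦ ∑' k, ε k * (((p : ℕ) : ℂ) ^ (-s)) ^ k)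
      (∑' n : ℕ, fakeMu ε n * (n : ℂ) ^ (-s)) := by
  have hterm (p : Nat.Primes) (k : ℕ) :
      fakeMu ε ((p : ℕ) ^ k) * (((p : ℕ) ^ k : ℕ) : ℂ) ^ (-s) =
        ε k * (((p : ℕ) : ℂ) ^ (-s)) ^ k := by
    rw [fakeMu_prime_pow ε hε0 p.prop, Nat.cast_pow, ← natCast_cpow_natCast_mul, cpow_nat_mul]
  simpa only [hterm] using EulerProduct.eulerProduct_hasProd
    (f := fun n : ℕ ↦ fakeMu ε n * (n : ℂ) ^ (-s)) (by simp)
    (fun hmn ↦ by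
      simp only [fakeMu_mul_of_coprime ε hmn, Nat.cast_mul, natCast_mul_natCast_cpow]
      ring)
    (summable_norm_fakeMu_mul_cpow hε hs) (by simp)

end DirichletSeries

theorem fakeMu_canonical_factorization_general
    (ε : ℕ → ℂ) (hε0 : ε 0 = 1)
    (hε : ∀ k, 1 ≤ k → ‖ε k‖ = 1 ∨ ε k = 0)
    (z w : ℂ)
    (f : ℕ → ℂ) (hf0 : f 0 = 0)
    (hf : ∀ n : ℕ, n ≠ 0 → f n = ∏ p ∈ n.primeFactors, ε (n.factorization p))
    (Gp : Nat.Primes → ℂ → ℂ)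
    (hGp : ∀ (p : Nat.Primes) (s : ℂ),
      Gp p s = (1 - ((p : ℕ) : ℂ) ^ (-s)) ^ z * (1 - ((p : ℕ) : ℂ) ^ (-(2 * s))) ^ w *
        (∑' k : ℕ, ε k * (((p : ℕ) : ℂ) ^ (-s)) ^ k))
    (s : ℂ) (hs : 1 < s.re) :
    Multipliable (fun p : Nat.Primes => (1 - ((p : ℕ) : ℂ) ^ (-s)) ^ (-z)) ∧
    Multipliable (fun p : Nat.Primes => (1 - ((p : ℕ) : ℂ) ^ (-(2 * s))) ^ (-w)) ∧
    Multipliable (fun p : Nat.Primes => Gp p s) ∧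
    ∑' n : ℕ, f n * (n : ℂ) ^ (-s)
      = (∏' p : Nat.Primes, (1 - ((p : ℕ) : ℂ) ^ (-s)) ^ (-z)) *
        (∏' p : Nat.Primes, (1 - ((p : ℕ) : ℂ) ^ (-(2 * s))) ^ (-w)) *
        (∏' p : Nat.Primes, Gp p s) := by
  have h2s : 1 < (2 * s).re := by
    simp only [mul_re, re_ofNat, im_ofNat, zero_mul, sub_zero]
    linarith
  have hf_eq : f = fakeMu ε := funext fun n ↦ by
    rcases eq_or_ne n 0 with rfl | hn
    · rw [hf0, fakeMu_zero]
    · rw [hf n hn, fakeMu_of_ne_zero ε hn]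
  have hε_le (k : ℕ) : ‖ε k‖ ≤ 1 := by
    rcases k.eq_zero_or_pos with rfl | hk
    · simp [hε0]
    · rcases hε k hk with h | h <;> simp [h]
  have hEuler := hasProd_fakeMu_dirichletSeries hε0 hε_le hs
  have hMult_s (c : ℂ) := multipliable_one_sub_cpow (Nat.Primes.summable_natCast_cpow_neg hs) c
  have hMult_2s (c : ℂ) := multipliable_one_sub_cpow (Nat.Primes.summable_natCast_cpow_neg h2s) c
  have hG : Multipliable fun p ↦ Gp p s := by
    simpa only [← hGp] using ((hMult_s z).mul (hMult_2s w)).mul hEuler.multipliable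
  refine ⟨hMult_s (-z), hMult_2s (-w), hG, ?_⟩
  rw [← (hMult_s _).tprod_mul (hMult_2s _), ← ((hMult_s _).mul (hMult_2s _)).tprod_mul hG,
    hf_eq, ← hEuler.tprod_eq]
  refine tprod_congr fun p ↦ ?_
  rw [hGp, ← mul_assoc, mul_mul_mul_comm,
    cpow_neg_mul_cpow_self (one_sub_prime_cpow_ne_zero p.prop hs),
    cpow_neg_mul_cpow_self (one_sub_prime_cpow_ne_zero p.prop h2s), one_mul, one_mul]

/-- For `Re s > 1`, the families `((1−p^{−s})^{−z})_p`,
`((1−p^{−2s})^{−w})_p` and `(G_p(s))_p` are multipliable, and the Dirichlet series of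
`𝔣` factors as the product of the three Euler products. -/
theorem fakeMu_canonical_factorization
    (ε : ℕ → ℂ) (hε0 : ε 0 = 1)
    (hε : ∀ k, 1 ≤ k → ‖ε k‖ = 1 ∨ ε k = 0)
    (z w : ℂ) (hz : z = ε 1) (hw : w = ε 2 - ε 1 * (ε 1 + 1) / 2)
    (f : ℕ → ℂ) (hf0 : f 0 = 0)
    (hf : ∀ n : ℕ, n ≠ 0 → f n = ∏ p ∈ n.primeFactors, ε (n.factorization p))
    (Gp : Nat.Primes → ℂ → ℂ)
    (hGp : ∀ (p : Nat.Primes) (s : ℂ),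
      Gp p s = (1 - ((p : ℕ) : ℂ) ^ (-s)) ^ z * (1 - ((p : ℕ) : ℂ) ^ (-(2 * s))) ^ w *
        (∑' k : ℕ, ε k * (((p : ℕ) : ℂ) ^ (-s)) ^ k))
    (s : ℂ) (hs : 1 < s.re) :
    Multipliable (fun p : Nat.Primes => (1 - ((p : ℕ) : ℂ) ^ (-s)) ^ (-z)) ∧
    Multipliable (fun p : Nat.Primes => (1 - ((p : ℕ) : ℂ) ^ (-(2 * s))) ^ (-w)) ∧
    Multipliable (fun p : Nat.Primes => Gp p s) ∧
    ∑' n : ℕ, f n * (n : ℂ) ^ (-s)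
      = (∏' p : Nat.Primes, (1 - ((p : ℕ) : ℂ) ^ (-s)) ^ (-z)) *
        (∏' p : Nat.Primes, (1 - ((p : ℕ) : ℂ) ^ (-(2 * s))) ^ (-w)) *
        (∏' p : Nat.Primes, Gp p s) :=
  fakeMu_canonical_factorization_general ε hε0 hε z w f hf0 hf Gp hGp s hs
end

section
/- Let ε₁, ε₂ ∈ ℂ each satisfy |ε| = 1 or ε = 0, and set w := ε₂ − ε₁(ε₁+1)/2. Then −2 ≤ Re w ≤ 25/16. Moreover both bounds are attained: Re w = −2 when ε₁ = 1 and ε₂ = −1, and Re w = 25/16 when ε₂ = 1 and ε₁ = e^{iθ} with cos θ = −1/4. -/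
/-! On the unit circle `Re (z (z + 1)) = 2 x² + x - 1` with `x = Re z ∈ [-1, 1]`; this quadratic
ranges over `[-9/8, 2]`, with its minimum at `x = -1/4`, and `z = 0` gives `0`. Together with
`Re ε₂ ∈ [-1, 1]` this confines `Re w` to `[-1 - 1, 1 + 9/16]`. -/

namespace Complex

theorem re_mul_add_one_of_norm_eq_one {z : ℂ} (hz : ‖z‖ = 1) :
    (z * (z + 1)).re = 2 * z.re ^ 2 + z.re - 1 := by
  have hsq : z.re * z.re + z.im * z.im = 1 := by
    rw [← normSq_apply, ← Complex.sq_norm, hz, one_pow]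
  simp only [mul_re, add_re, add_im, one_re, one_im]
  linarith

theorem re_mem_Icc_of_norm_le_one {z : ℂ} (hz : ‖z‖ ≤ 1) : z.re ∈ Set.Icc (-1) 1 :=
  abs_le.mp ((abs_re_le_norm z).trans hz)

theorem re_mul_add_one_mem_Icc {z : ℂ} (hz : ‖z‖ = 1 ∨ z = 0) :
    (z * (z + 1)).re ∈ Set.Icc (-9 / 8) 2 := by
  rcases hz with hz | rfl
  · obtain ⟨hlo, hhi⟩ := re_mem_Icc_of_norm_le_one hz.le
    rw [re_mul_add_one_of_norm_eq_one hz]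
    constructor <;> nlinarith [sq_nonneg (z.re + 1 / 4)]
  · norm_num

end Complex

open Complex in
/-- If `ε₁, ε₂` each lie on the unit circle or vanish and
`w := ε₂ − ε₁(ε₁+1)/2`, then `−2 ≤ Re w ≤ 25/16`; both bounds are attained:
at `ε₁ = 1, ε₂ = −1` one gets `Re w = −2`, and at `ε₂ = 1, ε₁ = e^{iθ}` with
`cos θ = −1/4` one gets `Re w = 25/16`. -/
theorem fakeMu_w_range
    (ε₁ ε₂ : ℂ) (h1 : ‖ε₁‖ = 1 ∨ ε₁ = 0) (h2 : ‖ε₂‖ = 1 ∨ ε₂ = 0) :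
    (-2 ≤ (ε₂ - ε₁ * (ε₁ + 1) / 2).re ∧ (ε₂ - ε₁ * (ε₁ + 1) / 2).re ≤ 25 / 16) ∧
    ((-1 : ℂ) - (1 : ℂ) * ((1 : ℂ) + 1) / 2).re = -2 ∧
    (∀ θ : ℝ, Real.cos θ = -(1 / 4) →
      ((1 : ℂ) - Complex.exp (θ * Complex.I) *
        (Complex.exp (θ * Complex.I) + 1) / 2).re = 25 / 16) := by
  refine ⟨?_, by norm_num, fun θ hθ => ?_⟩
  · have hε₂ : ‖ε₂‖ ≤ 1 := by rcases h2 with h | rfl <;> simp [*]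
    obtain ⟨hre₂lo, hre₂hi⟩ := re_mem_Icc_of_norm_le_one hε₂
    obtain ⟨hlo, hhi⟩ := re_mul_add_one_mem_Icc h1
    rw [sub_re, div_ofNat_re]
    constructor <;> linarith
  · rw [sub_re, one_re, div_ofNat_re, re_mul_add_one_of_norm_eq_one (norm_exp_ofReal_mul_I θ),
      exp_ofReal_mul_I_re, hθ]
    norm_num
end

section
/- Let f : ℕ → ℂ satisfy |f(n)| ≤ 1 for all n ≥ 1, and let F(s) := ∑_{n≥1} f(n) n^{−s} (absolutely convergent for Re s > 1). Then for every c > 1 and every x > 0, the function t ↦ F(c+it) Γ(c+it) x^{c+it} is absolutely integrable on ℝ and ∑_{n≥1} f(n) e^{−n/x} = (1/(2π)) ∫_{−∞}^{∞} F(c+it) Γ(c+it) x^{c+it} dt, where Γ is the complex Gamma function and x^{c+it} := e^{(c+it) log x}. -/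
/-!
Since `Γ` is the Mellin transform of `u ↦ e^{-u}`, the function `s ↦ Γ(s) x^s` is the
Mellin transform of `u ↦ e^{-u/x}`, and Mellin inversion on the line `Re s = c` gives
`e^{-n/x} = (1/2π) ∫ n^{-(c+it)} Γ(c+it) x^{c+it} dt` for every `n ≥ 1`. The functional
equation `Γ(s + 2) = s (s + 1) Γ(s)` bounds `|Γ(c+it)|` by `Γ(c+2)/(c² + t²)`, so `Γ` is
integrable on the line; together with the absolute convergence of `∑ f(n) n^{-c}` this allows
summing the inversion formula against `f(n)` and exchanging sum and integral.
-/

open MeasureTheory Complex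

namespace Complex

theorem norm_Gamma_le_Gamma_re {s : ℂ} (hs : 0 < s.re) : ‖Gamma s‖ ≤ Real.Gamma s.re := by
  rw [Gamma_eq_integral hs, GammaIntegral, Real.Gamma_eq_integral hs]
  refine (norm_integral_le_integral_norm _).trans_eq (setIntegral_congr_fun measurableSet_Ioi ?_)
  intro u hu
  simp [norm_cpow_eq_rpow_re_of_pos hu, norm_exp]

theorem norm_Gamma_mul_norm_sq_le {s : ℂ} (hs : 0 < s.re) :
    ‖Gamma s‖ * ‖s‖ ^ 2 ≤ Real.Gamma (s.re + 2) := by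
  have hs0 : s ≠ 0 := fun h => by simp [h] at hs
  have hs1 : s + 1 ≠ 0 := fun h => by
    have := congrArg re h
    simp at this; linarith
  have hnorm : ‖s‖ ≤ ‖s + 1‖ := by
    rw [← sq_le_sq₀ (norm_nonneg _) (norm_nonneg _), Complex.sq_norm, Complex.sq_norm,
      normSq_apply, normSq_apply]
    simp only [add_re, one_re, add_im, one_im, add_zero]
    nlinarith
  calc ‖Gamma s‖ * ‖s‖ ^ 2 ≤ ‖Gamma s‖ * (‖s + 1‖ * ‖s‖) := by
        rw [sq]; gcongr
    _ = ‖Gamma (s + 2)‖ := by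
        rw [show s + 2 = s + 1 + 1 by ring, Gamma_add_one _ hs1, Gamma_add_one _ hs0]
        simp only [norm_mul]; ring
    _ ≤ Real.Gamma (s.re + 2) := by
        simpa using norm_Gamma_le_Gamma_re (s := s + 2) (by simp; linarith)

theorem norm_Gamma_vertical_le {c : ℝ} (hc : 0 < c) (t : ℝ) :
    ‖Gamma (c + t * I)‖ ≤ Real.Gamma (c + 2) / (c ^ 2 + t ^ 2) := by
  have h := norm_Gamma_mul_norm_sq_le (s := c + t * I) (by simpa using hc)
  rw [Complex.sq_norm, normSq_add_mul_I] at h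
  simp only [add_re, ofReal_re, mul_re, I_re, mul_zero, ofReal_im, I_im, mul_one, sub_self,
    add_zero] at h
  rwa [le_div_iff₀ (by positivity)]

theorem continuous_Gamma_vertical {c : ℝ} (hc : 0 < c) :
    Continuous fun t : ℝ => Gamma (c + t * I) := by
  refine continuous_iff_continuousAt.2 fun t => ContinuousAt.comp (g := Gamma) ?_ (by fun_prop)
  refine (differentiableAt_Gamma _ fun m hm => ?_).continuousAt
  have := congrArg re hm
  simp at this
  linarith [(m.cast_nonneg : (0 : ℝ) ≤ m)]

theorem verticalIntegrable_Gamma {c : ℝ} (hc : 0 < c) : VerticalIntegrable Gamma c := by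
  have hdom : Integrable fun t : ℝ => Real.Gamma (c + 2) * c⁻¹ ^ 2 * (1 + (t / c) ^ 2)⁻¹ :=
    (integrable_inv_one_add_sq.comp_div hc.ne').const_mul _
  refine hdom.mono' (continuous_Gamma_vertical hc).aestronglyMeasurable
    (Filter.Eventually.of_forall fun t => (norm_Gamma_vertical_le hc t).trans_eq ?_)
  field_simp

theorem ofReal_inv_cpow_neg {x : ℝ} (hx : 0 < x) (s : ℂ) :
    ((x⁻¹ : ℝ) : ℂ) ^ (-s) = x ^ s := by
  rw [ofReal_inv, inv_cpow _ _ (by simp [arg_ofReal_of_nonneg hx.le, Real.pi_ne_zero.symm]),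
    ← cpow_neg, neg_neg]

end Complex

theorem mellin_exp_neg {s : ℂ} (hs : 0 < s.re) :
    mellin (fun u : ℝ => (Real.exp (-u) : ℂ)) s = Gamma s := by
  rw [Gamma_eq_integral hs, GammaIntegral_eq_mellin]

theorem mellinConvergent_exp_neg {s : ℂ} (hs : 0 < s.re) :
    MellinConvergent (fun u : ℝ => (Real.exp (-u) : ℂ)) s :=
  (GammaIntegral_convergent hs).congr_fun (fun u _ => by simp [mul_comm]) measurableSet_Ioi

theorem mellin_exp_neg_inv_mul {x : ℝ} (hx : 0 < x) {s : ℂ} (hs : 0 < s.re) :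
    mellin (fun u : ℝ => (Real.exp (-(x⁻¹ * u)) : ℂ)) s = Gamma s * x ^ s := by
  rw [mellin_comp_mul_left (fun u : ℝ => (Real.exp (-u) : ℂ)) s (inv_pos.2 hx),
    mellin_exp_neg hs, ofReal_inv_cpow_neg hx, smul_eq_mul, mul_comm]

theorem integrable_Gamma_mul_cpow_vertical {c x : ℝ} (hc : 0 < c) (hx : 0 < x) :
    Integrable fun t : ℝ => Gamma (c + t * I) * x ^ (c + t * I) := by
  have hcpow : Continuous fun t : ℝ => (x : ℂ) ^ (c + t * I) :=
    Continuous.const_cpow (by fun_prop) (Or.inl (ofReal_ne_zero.2 hx.ne'))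
  refine (verticalIntegrable_Gamma hc).mul_bdd (c := x ^ c) hcpow.aestronglyMeasurable
    (Filter.Eventually.of_forall fun t => ?_)
  simp [norm_cpow_eq_rpow_re_of_pos hx]

theorem integral_cpow_neg_mul_Gamma_mul_cpow {c x a : ℝ} (hc : 0 < c) (hx : 0 < x) (ha : 0 < a) :
    ∫ t : ℝ, (a : ℂ) ^ (-(c + t * I)) * (Gamma (c + t * I) * x ^ (c + t * I))
      = 2 * Real.pi * Real.exp (-(a / x)) := by
  have hcre : 0 < (c : ℂ).re := by simpa using hc
  have hmellin : ∀ t : ℝ, mellin (fun u : ℝ => (Real.exp (-(x⁻¹ * u)) : ℂ)) (c + t * I)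
      = Gamma (c + t * I) * x ^ (c + t * I) := fun t =>
    mellin_exp_neg_inv_mul hx (by simpa using hc)
  have hinv := mellinInv_mellin_eq c (fun u : ℝ => (Real.exp (-(x⁻¹ * u)) : ℂ)) ha
    ((MellinConvergent.comp_mul_left (inv_pos.2 hx)).2 (mellinConvergent_exp_neg hcre))
    ((integrable_Gamma_mul_cpow_vertical hc hx).congr (Filter.Eventually.of_forall fun t =>
      (hmellin t).symm)) (by fun_prop)
  simp only [mellinInv, hmellin, smul_eq_mul, real_smul] at hinv
  rw [inv_mul_eq_div x a] at hinv
  have hpi : (2 * Real.pi : ℂ) ≠ 0 := by simp [Real.pi_ne_zero]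
  rw [← hinv, ← mul_assoc, ofReal_div, ofReal_one, ofReal_mul, ofReal_ofNat,
    mul_one_div_cancel hpi, one_mul]

namespace LSeries

theorem norm_term_vertical (f : ℕ → ℂ) (c t : ℝ) (n : ℕ) :
    ‖term f (c + t * I) n‖ = ‖term f c n‖ := by
  simp [norm_term_eq]

theorem continuous_term (f : ℕ → ℂ) (n : ℕ) : Continuous fun s => term f s n :=
  continuous_iff_continuousAt.2 fun s => (hasDerivAt_term f n s).continuousAt

variable {f : ℕ → ℂ} {c : ℝ}

theorem continuous_LSeries_vertical (hf : LSeriesSummable f c) :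
    Continuous fun t : ℝ => LSeries f (c + t * I) :=
  continuous_tsum (fun n => (continuous_term f n).comp (by fun_prop)) (Summable.norm hf)
    fun n t => (norm_term_vertical f c t n).le

theorem norm_LSeries_vertical_le (hf : LSeriesSummable f c) (t : ℝ) :
    ‖LSeries f (c + t * I)‖ ≤ ∑' n, ‖term f c n‖ :=
  tsum_of_norm_bounded (Summable.norm hf).hasSum fun n => (norm_term_vertical f c t n).le

end LSeries

open LSeries

section SmoothedPerron

variable {f : ℕ → ℂ} {c x : ℝ}

theorem integrable_term_mul_Gamma_mul_cpow (hc : 0 < c) (hx : 0 < x) (n : ℕ) :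
    Integrable fun t : ℝ => term f (c + t * I) n * (Gamma (c + t * I) * x ^ (c + t * I)) :=
  (integrable_Gamma_mul_cpow_vertical hc hx).bdd_mul
    ((continuous_term f n).comp (by fun_prop)).aestronglyMeasurable
    (Filter.Eventually.of_forall fun t => (norm_term_vertical f c t n).le)

theorem integral_term_mul_Gamma_mul_cpow (hc : 0 < c) (hx : 0 < x) (hf0 : f 0 = 0) (n : ℕ) :
    ∫ t : ℝ, term f (c + t * I) n * (Gamma (c + t * I) * x ^ (c + t * I))
      = 2 * Real.pi * (f n * exp (-(n / x))) := by
  rcases eq_or_ne n 0 with rfl | hn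
  · simp [hf0]
  have hn_pos : (0 : ℝ) < n := by positivity
  simp_rw [term_of_ne_zero hn, div_eq_mul_inv, ← cpow_neg, mul_assoc, integral_const_mul]
  rw [show (n : ℂ) = ((n : ℝ) : ℂ) by norm_cast,
    integral_cpow_neg_mul_Gamma_mul_cpow hc hx hn_pos]
  push_cast
  simp only [div_eq_mul_inv]
  ring

theorem integral_norm_term_mul_Gamma_mul_cpow (n : ℕ) :
    ∫ t : ℝ, ‖term f (c + t * I) n * (Gamma (c + t * I) * x ^ (c + t * I))‖
      = ‖term f c n‖ * ∫ t : ℝ, ‖Gamma (c + t * I) * x ^ (c + t * I)‖ := by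
  simp_rw [norm_mul _ (Gamma _ * _), norm_term_vertical, integral_const_mul]

theorem integrable_LSeries_mul_Gamma_mul_cpow (hc : 0 < c) (hx : 0 < x)
    (hf : LSeriesSummable f c) :
    Integrable fun t : ℝ => LSeries f (c + t * I) * (Gamma (c + t * I) * x ^ (c + t * I)) :=
  (integrable_Gamma_mul_cpow_vertical hc hx).bdd_mul
    (continuous_LSeries_vertical hf).aestronglyMeasurable
    (Filter.Eventually.of_forall (norm_LSeries_vertical_le hf))

theorem integral_LSeries_mul_Gamma_mul_cpow (hc : 0 < c) (hx : 0 < x) (hf0 : f 0 = 0)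
    (hf : LSeriesSummable f c) :
    ∫ t : ℝ, LSeries f (c + t * I) * (Gamma (c + t * I) * x ^ (c + t * I))
      = 2 * Real.pi * ∑' n : ℕ, f n * exp (-(n / x)) := by
  simp_rw [LSeries, ← tsum_mul_right]
  rw [← integral_tsum_of_summable_integral_norm (integrable_term_mul_Gamma_mul_cpow hc hx)]
  · simp_rw [integral_term_mul_Gamma_mul_cpow hc hx hf0, tsum_mul_left]
  · simp_rw [integral_norm_term_mul_Gamma_mul_cpow]
    exact (Summable.norm hf).mul_right _

end SmoothedPerron

/-- Smoothed Perron formula with exponential kernel: for a bounded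
arithmetic function `f`, `c > 1` and `x > 0`, the integrand `F(c+it)Γ(c+it)x^{c+it}`
is absolutely integrable in `t` and
`∑_{n≥1} f(n) e^{−n/x} = (1/2π) ∫_ℝ F(c+it) Γ(c+it) x^{c+it} dt`. -/
theorem smoothed_perron_exponential
    (f : ℕ → ℂ) (hf0 : f 0 = 0) (hf : ∀ n : ℕ, 1 ≤ n → ‖f n‖ ≤ 1)
    (F : ℂ → ℂ) (hF : ∀ s : ℂ, 1 < s.re → F s = ∑' n : ℕ, f n * (n : ℂ) ^ (-s))
    (c : ℝ) (hc : 1 < c) (x : ℝ) (hx : 0 < x) :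
    Integrable (fun t : ℝ =>
      F ((c : ℂ) + (t : ℂ) * Complex.I) * Complex.Gamma ((c : ℂ) + (t : ℂ) * Complex.I) *
        (x : ℂ) ^ ((c : ℂ) + (t : ℂ) * Complex.I)) ∧
    ∑' n : ℕ, f n * Complex.exp (-((n : ℂ) / (x : ℂ)))
      = (1 / (2 * (Real.pi : ℂ))) *
        ∫ t : ℝ, F ((c : ℂ) + (t : ℂ) * Complex.I) *
          Complex.Gamma ((c : ℂ) + (t : ℂ) * Complex.I) *
          (x : ℂ) ^ ((c : ℂ) + (t : ℂ) * Complex.I) := by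
  have hsum : LSeriesSummable f c :=
    LSeriesSummable_of_bounded_of_one_lt_real (fun n hn => hf n (Nat.one_le_iff_ne_zero.2 hn)) hc
  have hF_eq : ∀ t : ℝ, F (c + t * I) * Gamma (c + t * I) * x ^ (c + t * I)
      = LSeries f (c + t * I) * (Gamma (c + t * I) * x ^ (c + t * I)) := fun t => by
    rw [hF _ (by simpa using hc), LSeries_def₀ hf0, mul_assoc]
    simp only [cpow_neg, div_eq_mul_inv]
  simp_rw [hF_eq]
  refine ⟨integrable_LSeries_mul_Gamma_mul_cpow (by linarith) hx hsum, ?_⟩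
  rw [integral_LSeries_mul_Gamma_mul_cpow (by linarith) hx hf0 hsum, ← mul_assoc,
    one_div_mul_cancel (by simp [Real.pi_ne_zero]), one_mul]
end

section
/- (Watson's lemma.) Let v > 0 and let K : (0,v) → ℂ be absolutely integrable. Suppose there exist s ∈ ℂ with Re s > −1, a number r ∈ (0,v], an integer M ≥ 0, and a function J : [0,r] → ℂ having M+1 continuous derivatives on [0,r], such that K(u) = u^s J(u) for all u ∈ (0,r) (with u^s := e^{s log u} for u > 0). Then for every L > 0 the integral Δ(L) := ∫_0^v e^{−Lu} K(u) du is finite, and there is a constant C such that for all L ≥ 1, |Δ(L) − ∑_{k=0}^{M} J^{(k)}(0) Γ(s+k+1) / (k! L^{s+k+1})| ≤ C L^{−Re s − M − 2}, where L^{s+k+1} := e^{(s+k+1) log L} and Γ is the Gamma function. -/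
/-!
Split `Δ(L)` at `r`. On `(0, r)` replace `J` by its Taylor polynomial of degree `M` at `0`; the
remainder is `O(u^{M+1})`, so it contributes at most a constant times
`∫_0^∞ e^{-Lu} u^{Re s + M + 1} du = Γ(Re s + M + 2) L^{-Re s - M - 2}`. Each monomial `u^{s+k}`
gives `∫_0^∞ e^{-Lu} u^{s+k} du = Γ(s+k+1) / L^{s+k+1}` minus the integral over `[r, ∞)`. What is
left are integrals over subsets of `[r, ∞)`, which are `O(e^{-rL})` and hence smaller than any power
of `L`.
-/

open MeasureTheory Set Filter Asymptotics

noncomputable def laplaceOn (S : Set ℝ) (f : ℝ → ℂ) (L : ℝ) : ℂ :=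
  ∫ u in S, ((Real.exp (-(L * u)) : ℝ) : ℂ) * f u

lemma norm_ofReal_exp (x : ℝ) : ‖((Real.exp x : ℝ) : ℂ)‖ = Real.exp x := by
  simp

lemma MeasureTheory.IntegrableOn.ofReal_exp_neg_mul_mul {f : ℝ → ℂ} {S : Set ℝ}
    (hf : IntegrableOn f S) (hS : MeasurableSet S) (hS0 : S ⊆ Ici 0) {L : ℝ} (hL : 0 ≤ L) :
    IntegrableOn (fun u => ((Real.exp (-(L * u)) : ℝ) : ℂ) * f u) S := by
  refine hf.bdd_mul (c := 1) (by fun_prop) ((ae_restrict_iff' hS).2 (.of_forall fun u hu => ?_))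
  rw [norm_ofReal_exp, Real.exp_le_one_iff, neg_nonpos]
  exact mul_nonneg hL (hS0 hu)

lemma integrableOn_ofReal_exp_neg_mul_mul_cpow {w : ℂ} (hw : -1 < w.re) {L : ℝ} (hL : 0 < L) :
    IntegrableOn (fun u : ℝ => ((Real.exp (-(L * u)) : ℝ) : ℂ) * (u : ℂ) ^ w) (Ioi 0) := by
  have hreal := integrableOn_rpow_mul_exp_neg_mul_rpow hw one_pos hL
  refine hreal.mono' (by fun_prop)
    ((ae_restrict_iff' measurableSet_Ioi).2 (.of_forall fun u hu => ?_))
  rw [norm_mul, norm_ofReal_exp, Complex.norm_cpow_eq_rpow_re_of_pos hu, Real.rpow_one,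
    neg_mul, mul_comm]

lemma laplaceOn_Ioi_cpow {w : ℂ} (hw : -1 < w.re) {L : ℝ} (hL : 0 < L) :
    laplaceOn (Ioi 0) (fun u => (u : ℂ) ^ w) L = Complex.Gamma (w + 1) / (L : ℂ) ^ (w + 1) := by
  have hw' : 0 < (w + 1).re := by simp only [Complex.add_re, Complex.one_re]; linarith
  have harg : Complex.arg L ≠ Real.pi := by
    rw [Complex.arg_ofReal_of_nonneg hL.le]; exact Real.pi_ne_zero.symm
  have h := Complex.integral_cpow_mul_exp_neg_mul_Ioi hw' hL
  rw [add_sub_cancel_right, one_div, Complex.inv_cpow _ _ harg] at h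
  rw [laplaceOn, div_eq_inv_mul, ← h]
  refine setIntegral_congr_fun measurableSet_Ioi fun u _ => ?_
  simp only [Complex.ofReal_exp, Complex.ofReal_neg, Complex.ofReal_mul, mul_comm]

lemma laplaceOn_Ioo_cpow {w : ℂ} (hw : -1 < w.re) {L r : ℝ} (hL : 0 < L) (hr : 0 < r) :
    laplaceOn (Ioo 0 r) (fun u => (u : ℂ) ^ w) L =
      Complex.Gamma (w + 1) / (L : ℂ) ^ (w + 1) - laplaceOn (Ici r) (fun u => (u : ℂ) ^ w) L := by
  have hint := integrableOn_ofReal_exp_neg_mul_mul_cpow hw hL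
  rw [← laplaceOn_Ioi_cpow hw hL, eq_sub_iff_add_eq, laplaceOn, laplaceOn, laplaceOn,
    ← Ioo_union_Ici_eq_Ioi hr, setIntegral_union
      ((Iio_disjoint_Ici le_rfl).mono_left Ioo_subset_Iio_self) measurableSet_Ici
      (hint.mono_set Ioo_subset_Ioi_self) (hint.mono_set (Ici_subset_Ioi.2 hr))]

lemma norm_laplaceOn_le_of_norm_le_rpow {S : Set ℝ} (hS : MeasurableSet S) (hS0 : S ⊆ Ioi 0)
    {g : ℝ → ℂ} {b C : ℝ} (hb : -1 < b) (hC : 0 ≤ C) (hg : ∀ u ∈ S, ‖g u‖ ≤ C * u ^ b)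
    {L : ℝ} (hL : 0 < L) :
    ‖laplaceOn S g L‖ ≤ C * Real.Gamma (b + 1) * L ^ (-(b + 1)) := by
  have hint : IntegrableOn (fun u => C * (u ^ b * Real.exp (-(L * u)))) (Ioi 0) := by
    have h := integrableOn_rpow_mul_exp_neg_mul_rpow hb one_pos hL
    simp only [neg_mul, Real.rpow_one] at h
    exact h.const_mul C
  have hgamma : ∫ u in Ioi 0, C * (u ^ b * Real.exp (-(L * u))) =
      C * Real.Gamma (b + 1) * L ^ (-(b + 1)) := by
    have h := Real.integral_rpow_mul_exp_neg_mul_Ioi (a := b + 1) (by linarith) hL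
    rw [add_sub_cancel_right, one_div, Real.inv_rpow hL.le, ← Real.rpow_neg hL.le] at h
    rw [integral_const_mul, h]; ring
  calc ‖laplaceOn S g L‖ ≤ ∫ u in S, C * (u ^ b * Real.exp (-(L * u))) := by
        refine norm_integral_le_of_norm_le (hint.mono_set hS0)
          ((ae_restrict_iff' hS).2 (.of_forall fun u hu => ?_))
        rw [norm_mul, norm_ofReal_exp, mul_comm]
        calc ‖g u‖ * Real.exp (-(L * u)) ≤ C * u ^ b * Real.exp (-(L * u)) := by
              gcongr; exact hg u hu
          _ = _ := by ring
    _ ≤ ∫ u in Ioi 0, C * (u ^ b * Real.exp (-(L * u))) := by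
        refine setIntegral_mono_set hint ((ae_restrict_iff' measurableSet_Ioi).2
          (.of_forall fun u hu => ?_)) hS0.eventuallyLE
        have hu : (0 : ℝ) < u := hu
        positivity
    _ = _ := hgamma

lemma isBigO_exp_neg_mul_rpow {r : ℝ} (hr : 0 < r) (a : ℝ) :
    (fun L => Real.exp (-(L * r))) =O[𝓟 (Ici 1)] fun L => L ^ a := by
  set N := ⌈-a⌉₊
  refine isBigO_principal.2 ⟨N.factorial / r ^ N, fun L (hL : 1 ≤ L) => ?_⟩
  have hL0 : 0 < L := one_pos.trans_le hL
  have hpow : L ^ (-(N : ℝ)) ≤ L ^ a :=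
    Real.rpow_le_rpow_of_exponent_le hL (by linarith [Nat.le_ceil (-a)])
  rw [Real.norm_of_nonneg (Real.exp_pos _).le, Real.norm_of_nonneg (by positivity)]
  calc Real.exp (-(L * r)) ≤ N.factorial / (L * r) ^ N := by
        rw [Real.exp_neg, ← inv_div]
        exact inv_anti₀ (by positivity) (Real.pow_div_factorial_le_exp _ (by positivity) N)
    _ = N.factorial / r ^ N * L ^ (-(N : ℝ)) := by
        rw [Real.rpow_neg hL0.le, Real.rpow_natCast, mul_pow]; field_simp
    _ ≤ N.factorial / r ^ N * L ^ a := by gcongr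

lemma isBigO_laplaceOn_of_subset_Ici {S : Set ℝ} {r : ℝ} (hr : 0 < r) (hS : MeasurableSet S)
    (hSr : S ⊆ Ici r) {f : ℝ → ℂ}
    (hf : IntegrableOn (fun u => ((Real.exp (-u) : ℝ) : ℂ) * f u) S) (a : ℝ) :
    laplaceOn S f =O[𝓟 (Ici 1)] fun L => L ^ a := by
  refine IsBigO.trans ?_ (isBigO_exp_neg_mul_rpow hr a)
  refine isBigO_principal.2 ⟨Real.exp r * ∫ u in S, ‖((Real.exp (-u) : ℝ) : ℂ) * f u‖,
    fun L (hL : 1 ≤ L) => ?_⟩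
  rw [Real.norm_of_nonneg (Real.exp_pos _).le, mul_comm _ (Real.exp _), ← mul_assoc,
    ← Real.exp_add, ← integral_const_mul]
  refine norm_integral_le_of_norm_le (hf.norm.const_mul _)
    ((ae_restrict_iff' hS).2 (.of_forall fun u hu => ?_))
  -- `e^{-Lu} = e^{-(L-1)u} e^{-u}` and `(L - 1) u ≥ (L - 1) r`
  have hu : r ≤ u := hSr hu
  rw [norm_mul, norm_mul, norm_ofReal_exp, norm_ofReal_exp, ← mul_assoc, ← Real.exp_add]
  gcongr
  nlinarith

lemma isBigO_laplaceOn_Ici_cpow {r : ℝ} (hr : 0 < r) {w : ℂ} (hw : -1 < w.re) (a : ℝ) :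
    laplaceOn (Ici r) (fun u => (u : ℂ) ^ w) =O[𝓟 (Ici 1)] fun L => L ^ a := by
  have h := (integrableOn_ofReal_exp_neg_mul_mul_cpow hw one_pos).mono_set (Ici_subset_Ioi.2 hr)
  simp only [one_mul] at h
  exact isBigO_laplaceOn_of_subset_Ici hr measurableSet_Ici subset_rfl h a

lemma neg_one_lt_re_add_natCast {s : ℂ} (hs : -1 < s.re) (k : ℕ) : -1 < (s + k).re := by
  simp only [Complex.add_re, Complex.natCast_re]
  linarith [k.cast_nonneg (α := ℝ)]

lemma cpow_mul_taylorWithinEval {u : ℝ} (hu : 0 < u) (s : ℂ) (J : ℝ → ℂ) (M : ℕ) (S : Set ℝ) :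
    (u : ℂ) ^ s * taylorWithinEval J M S 0 u =
      ∑ k ∈ Finset.range (M + 1),
        iteratedDerivWithin k J S 0 / k.factorial * (u : ℂ) ^ (s + k) := by
  have hu0 : (u : ℂ) ≠ 0 := Complex.ofReal_ne_zero.2 hu.ne'
  simp only [taylor_within_apply, sub_zero, Finset.mul_sum, Complex.real_smul,
    Complex.cpow_add _ _ hu0, Complex.cpow_natCast]
  refine Finset.sum_congr rfl fun k _ => ?_
  push_cast
  field_simp

lemma exists_norm_cpow_mul_sub_taylorWithinEval_le {r : ℝ} (hr : 0 ≤ r) {M : ℕ} {J : ℝ → ℂ}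
    (hJ : ContDiffOn ℝ (M + 1 : ℕ) J (Icc 0 r)) (s : ℂ) :
    ∃ C, 0 ≤ C ∧ ∀ u ∈ Ioo 0 r,
      ‖(u : ℂ) ^ s * (J u - taylorWithinEval J M (Icc 0 r) 0 u)‖ ≤ C * u ^ (s.re + M + 1) := by
  obtain ⟨C, hC⟩ := exists_taylor_mean_remainder_bound hr hJ
  refine ⟨max C 0, le_max_right _ _, fun u hu => ?_⟩
  have hu0 : 0 < u := hu.1
  have hJu := hC u (Ioo_subset_Icc_self hu)
  rw [sub_zero] at hJu
  rw [norm_mul, Complex.norm_cpow_eq_rpow_re_of_pos hu0, Real.rpow_add hu0,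
    Real.rpow_add hu0, Real.rpow_natCast, Real.rpow_one, mul_assoc, ← pow_succ]
  calc u ^ s.re * ‖J u - taylorWithinEval J M (Icc 0 r) 0 u‖ ≤ u ^ s.re * (C * u ^ (M + 1)) := by
        gcongr
    _ ≤ u ^ s.re * (max C 0 * u ^ (M + 1)) := by gcongr; exact le_max_left _ _
    _ = _ := by ring

lemma laplaceOn_sub_sum_eq {v r L : ℝ} {K J : ℝ → ℂ} {s : ℂ} (M : ℕ) (T : Set ℝ)
    (hK : IntegrableOn K (Ioo 0 v)) (hs : -1 < s.re) (hr : 0 < r) (hrv : r ≤ v)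
    (hKJ : ∀ u ∈ Ioo 0 r, K u = (u : ℂ) ^ s * J u) (hL : 0 < L) :
    laplaceOn (Ioo 0 v) K L -
        ∑ k ∈ Finset.range (M + 1), iteratedDerivWithin k J T 0 * Complex.Gamma (s + k + 1) /
          ((k.factorial : ℂ) * (L : ℂ) ^ (s + (k : ℂ) + 1)) =
      laplaceOn (Ioo 0 r) (fun u => (u : ℂ) ^ s * (J u - taylorWithinEval J M T 0 u)) L +
        laplaceOn (Ico r v) K L -
        ∑ k ∈ Finset.range (M + 1), iteratedDerivWithin k J T 0 / k.factorial *
          laplaceOn (Ici r) (fun u => (u : ℂ) ^ (s + k)) L := by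
  have hint := hK.ofReal_exp_neg_mul_mul measurableSet_Ioo (fun u hu => hu.1.le) hL.le
  have hre := neg_one_lt_re_add_natCast hs
  have hsplit : laplaceOn (Ioo 0 v) K L = laplaceOn (Ioo 0 r) K L + laplaceOn (Ico r v) K L := by
    rw [laplaceOn, ← Ioo_union_Ico_eq_Ioo hr hrv, setIntegral_union
      ((Iio_disjoint_Ici le_rfl).mono Ioo_subset_Iio_self Ico_subset_Ici_self) measurableSet_Ico
      (hint.mono_set (Ioo_subset_Ioo_right hrv))
      (hint.mono_set fun u hu => ⟨hr.trans_le hu.1, hu.2⟩)]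
    rfl
  have hrem : laplaceOn (Ioo 0 r) (fun u => (u : ℂ) ^ s * (J u - taylorWithinEval J M T 0 u)) L =
      laplaceOn (Ioo 0 r) K L - ∑ k ∈ Finset.range (M + 1), iteratedDerivWithin k J T 0 /
        k.factorial * laplaceOn (Ioo 0 r) (fun u => (u : ℂ) ^ (s + k)) L := by
    have hpow (k : ℕ) : IntegrableOn (fun u : ℝ => ((Real.exp (-(L * u)) : ℝ) : ℂ) *
        (u : ℂ) ^ (s + k)) (Ioo 0 r) :=
      (integrableOn_ofReal_exp_neg_mul_mul_cpow (hre k) hL).mono_set Ioo_subset_Ioi_self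
    simp only [laplaceOn, ← integral_const_mul]
    rw [← integral_finsetSum _ fun k _ => (hpow k).const_mul _,
      ← integral_sub (hint.mono_set (Ioo_subset_Ioo_right hrv))
        (integrable_finsetSum _ fun k _ => (hpow k).const_mul _)]
    refine setIntegral_congr_fun measurableSet_Ioo fun u hu => ?_
    simp only [hKJ u hu, mul_sub, cpow_mul_taylorWithinEval hu.1, Finset.mul_sum]
    congr 1
    exact Finset.sum_congr rfl fun k _ => by ring
  have hgamma : ∑ k ∈ Finset.range (M + 1), iteratedDerivWithin k J T 0 / k.factorial *
        laplaceOn (Ioo 0 r) (fun u => (u : ℂ) ^ (s + k)) L =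
      ∑ k ∈ Finset.range (M + 1), iteratedDerivWithin k J T 0 * Complex.Gamma (s + k + 1) /
          ((k.factorial : ℂ) * (L : ℂ) ^ (s + (k : ℂ) + 1)) -
        ∑ k ∈ Finset.range (M + 1), iteratedDerivWithin k J T 0 / k.factorial *
          laplaceOn (Ici r) (fun u => (u : ℂ) ^ (s + k)) L := by
    rw [← Finset.sum_sub_distrib]
    refine Finset.sum_congr rfl fun k _ => ?_
    rw [laplaceOn_Ioo_cpow (hre k) hL hr]
    ring
  rw [hsplit, hrem, hgamma]
  ring

theorem watson_lemma_general
    (v : ℝ) (K : ℝ → ℂ) (hK : IntegrableOn K (Set.Ioo 0 v))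
    (s : ℂ) (hs : -1 < s.re) (r : ℝ) (hr : 0 < r) (hrv : r ≤ v)
    (M : ℕ) (J : ℝ → ℂ) (hJ : ContDiffOn ℝ (M + 1 : ℕ) J (Set.Icc 0 r))
    (hKJ : ∀ u ∈ Set.Ioo (0 : ℝ) r, K u = ((u : ℂ) ^ s) * J u) :
    (∀ L : ℝ, 0 < L →
      IntegrableOn (fun u : ℝ => ((Real.exp (-(L * u)) : ℝ) : ℂ) * K u) (Set.Ioo 0 v)) ∧
    ∃ C : ℝ, ∀ L : ℝ, 1 ≤ L →
      ‖(∫ u in Set.Ioo (0 : ℝ) v, ((Real.exp (-(L * u)) : ℝ) : ℂ) * K u) -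
          ∑ k ∈ Finset.range (M + 1),
            iteratedDerivWithin k J (Set.Icc 0 r) 0 * Complex.Gamma (s + k + 1) /
              ((k.factorial : ℂ) * (L : ℂ) ^ (s + (k : ℂ) + 1))‖
        ≤ C * L ^ (-s.re - (M : ℝ) - 2) := by
  have hint (L : ℝ) (hL : 0 ≤ L) :=
    hK.ofReal_exp_neg_mul_mul measurableSet_Ioo (fun u hu => hu.1.le) hL
  refine ⟨fun L hL => hint L hL.le, ?_⟩
  obtain ⟨C, hC, hCJ⟩ := exists_norm_cpow_mul_sub_taylorWithinEval_le hr.le hJ s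
  have hrem :
      laplaceOn (Ioo 0 r) (fun u => (u : ℂ) ^ s * (J u - taylorWithinEval J M (Icc 0 r) 0 u))
        =O[𝓟 (Ici 1)] fun L => L ^ (-s.re - M - 2) := by
    refine isBigO_principal.2 ⟨C * Real.Gamma (s.re + M + 1 + 1), fun L (hL : 1 ≤ L) => ?_⟩
    rw [Real.norm_of_nonneg (Real.rpow_nonneg (zero_le_one.trans hL) _),
      show -s.re - M - 2 = -(s.re + M + 1 + 1) by ring]
    exact norm_laplaceOn_le_of_norm_le_rpow measurableSet_Ioo (fun u hu => hu.1)
      (by linarith [M.cast_nonneg (α := ℝ)]) hC hCJ (one_pos.trans_le hL)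
  have htailK : laplaceOn (Ico r v) K =O[𝓟 (Ici 1)] fun L => L ^ (-s.re - M - 2) :=
    isBigO_laplaceOn_of_subset_Ici hr measurableSet_Ico Ico_subset_Ici_self
      (by simpa only [one_mul] using
        (hint 1 zero_le_one).mono_set fun u hu => ⟨hr.trans_le hu.1, hu.2⟩) _
  have htailGamma (k : ℕ) : laplaceOn (Ici r) (fun u => (u : ℂ) ^ (s + k))
      =O[𝓟 (Ici 1)] fun L => L ^ (-s.re - M - 2) :=
    isBigO_laplaceOn_Ici_cpow hr (neg_one_lt_re_add_natCast hs k) _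
  obtain ⟨D, hD⟩ := isBigO_principal.1 ((hrem.add htailK).sub
    (IsBigO.sum fun k _ => (htailGamma k).const_mul_left
      (iteratedDerivWithin k J (Icc 0 r) 0 / k.factorial)))
  refine ⟨D, fun L hL => ?_⟩
  have hD := hD L hL
  rw [Real.norm_of_nonneg (Real.rpow_nonneg (zero_le_one.trans hL) _)] at hD
  show ‖laplaceOn (Ioo 0 v) K L - _‖ ≤ _
  rw [laplaceOn_sub_sum_eq M (Icc 0 r) hK hs hr hrv hKJ (one_pos.trans_le hL)]
  simpa only [Pi.add_apply, Pi.sub_apply, Finset.sum_apply] using hD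

/-- **Watson's lemma.** If `K` is absolutely integrable on `(0,v)` and
`K(u) = u^s J(u)` on `(0,r)` with `Re s > −1` and `J` having `M+1` continuous
derivatives on `[0,r]`, then `Δ(L) = ∫_0^v e^{−Lu} K(u) du` is finite for all `L > 0`
and admits the asymptotic expansion
`Δ(L) = ∑_{k=0}^M J^{(k)}(0) Γ(s+k+1)/(k! L^{s+k+1}) + O(L^{−Re s − M − 2})`. -/
theorem watson_lemma
    (v : ℝ) (hv : 0 < v) (K : ℝ → ℂ) (hK : IntegrableOn K (Set.Ioo 0 v))
    (s : ℂ) (hs : -1 < s.re) (r : ℝ) (hr : 0 < r) (hrv : r ≤ v)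
    (M : ℕ) (J : ℝ → ℂ) (hJ : ContDiffOn ℝ (M + 1 : ℕ) J (Set.Icc 0 r))
    (hKJ : ∀ u ∈ Set.Ioo (0 : ℝ) r, K u = ((u : ℂ) ^ s) * J u) :
    (∀ L : ℝ, 0 < L →
      IntegrableOn (fun u : ℝ => ((Real.exp (-(L * u)) : ℝ) : ℂ) * K u) (Set.Ioo 0 v)) ∧
    ∃ C : ℝ, ∀ L : ℝ, 1 ≤ L →
      ‖(∫ u in Set.Ioo (0 : ℝ) v, ((Real.exp (-(L * u)) : ℝ) : ℂ) * K u) -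
          ∑ k ∈ Finset.range (M + 1),
            iteratedDerivWithin k J (Set.Icc 0 r) 0 * Complex.Gamma (s + k + 1) /
              ((k.factorial : ℂ) * (L : ℂ) ^ (s + (k : ℂ) + 1))‖
        ≤ C * L ^ (-s.re - (M : ℝ) - 2) :=
  watson_lemma_general v K hK s hs r hr hrv M J hJ hKJ
end

section
/- Assume in addition that |γ_n| ≥ 1 for every n. Then for every τ ∈ ℝ, (1/Y) ∫_1^Y t^{−iτ} f(t) dt → 0 as Y → ∞, where t^{−iτ} := e^{−iτ log t}. (Logarithmic-Cesàro cancellation of an absolutely convergent trigonometric series twisted by t^{−iτ}.) -/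
open MeasureTheory intervalIntegral Complex Filter Set

/-! Integrating the oscillating factor `exp (I γ t)` by parts gains a factor `1 / |γ|` at the
price of the total variation of the amplitude. The amplitude `t ^ (-I τ)` has modulus one and
total variation `|τ| log Y` on `[1, Y]`, so each frequency contributes `O(1 + |τ| log Y)` to
`∫_1^Y t^{-iτ} f(t) dt`, uniformly in `n` since `|γ n| ≥ 1`. Summing against `∑ ‖a n‖ < ∞`
(dominated convergence justifies the exchange) bounds the integral by `O(log Y) = o(Y)`. -/

lemma norm_exp_I_mul_ofReal_mul_ofReal (γ t : ℝ) : ‖exp (I * γ * t)‖ = 1 := by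
  rw [mul_assoc, ← ofReal_mul, norm_exp_I_mul_ofReal]

lemma hasDerivAt_ofReal_cpow_const_of_pos (c : ℂ) {x : ℝ} (hx : 0 < x) :
    HasDerivAt (fun y : ℝ => (y : ℂ) ^ c) (c * (x : ℂ) ^ (c - 1)) x := by
  simpa using ((hasDerivAt_id (x : ℂ)).cpow_const (ofReal_mem_slitPlane.2 hx)).comp_ofReal

lemma norm_ofReal_cpow_neg_I_mul (τ : ℝ) {t : ℝ} (ht : 0 < t) :
    ‖(t : ℂ) ^ (-(I * τ))‖ = 1 := by
  simp [norm_cpow_eq_rpow_re_of_pos ht]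

lemma norm_integral_mul_exp_I_mul_le {u u' : ℝ → ℂ} {a b γ : ℝ} (hab : a ≤ b) (hγ : γ ≠ 0)
    (hu : ∀ t ∈ uIcc a b, HasDerivAt u (u' t) t) (hu' : IntervalIntegrable u' volume a b) :
    ‖∫ t in a..b, u t * exp (I * γ * t)‖ ≤ (‖u b‖ + ‖u a‖ + ∫ t in a..b, ‖u' t‖) / |γ| := by
  have hIγ : I * γ ≠ 0 := mul_ne_zero I_ne_zero (ofReal_ne_zero.2 hγ)
  set v : ℝ → ℂ := fun t => exp (I * γ * t) / (I * γ)
  have hv : ∀ t : ℝ, HasDerivAt v (exp (I * γ * t)) t := fun t => by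
    have := (((hasDerivAt_id (t : ℂ)).const_mul (I * γ)).cexp.comp_ofReal).div_const (I * γ)
    simpa [v, mul_div_cancel_left₀ _ hIγ, mul_comm] using this
  have hnorm_v : ∀ t, ‖v t‖ = |γ|⁻¹ := fun t => by
    simp [v, norm_exp_I_mul_ofReal_mul_ofReal]
  have hexp : IntervalIntegrable (fun t : ℝ => exp (I * γ * t)) volume a b :=
    (by fun_prop : Continuous fun t : ℝ => exp (I * γ * t)).intervalIntegrable a b
  rw [integral_mul_deriv_eq_deriv_mul hu (fun t _ => hv t) hu' hexp]
  have hrest : ‖∫ t in a..b, u' t * v t‖ ≤ (∫ t in a..b, ‖u' t‖) / |γ| := by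
    calc ‖∫ t in a..b, u' t * v t‖ ≤ ∫ t in a..b, ‖u' t * v t‖ :=
          norm_integral_le_integral_norm hab
      _ = (∫ t in a..b, ‖u' t‖) / |γ| := by
          simp only [norm_mul, hnorm_v, intervalIntegral.integral_mul_const, div_eq_mul_inv]
  calc ‖u b * v b - u a * v a - ∫ t in a..b, u' t * v t‖
      ≤ ‖u b * v b‖ + ‖u a * v a‖ + ‖∫ t in a..b, u' t * v t‖ :=
        norm_sub_le_of_le (norm_sub_le _ _) le_rfl
    _ ≤ ‖u b‖ * |γ|⁻¹ + ‖u a‖ * |γ|⁻¹ + (∫ t in a..b, ‖u' t‖) / |γ| := by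
        rw [norm_mul, norm_mul, hnorm_v, hnorm_v]
        exact add_le_add_right hrest _
    _ = _ := by ring

lemma norm_integral_cpow_mul_exp_I_mul_le (τ : ℝ) {γ Y : ℝ} (hγ : γ ≠ 0) (hY : 1 ≤ Y) :
    ‖∫ t in (1 : ℝ)..Y, (t : ℂ) ^ (-(I * τ)) * exp (I * γ * t)‖ ≤ (2 + |τ| * Real.log Y) / |γ| := by
  have hpos : ∀ t ∈ uIcc 1 Y, 0 < t := fun t ht => by
    rw [uIcc_of_le hY] at ht; linarith [ht.1]
  have hderiv_norm : ∀ t ∈ uIcc 1 Y, ‖-(I * τ) * (t : ℂ) ^ (-(I * τ) - 1)‖ = |τ| * t⁻¹ := by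
    intro t ht
    simp [norm_cpow_eq_rpow_re_of_pos (hpos t ht), Real.rpow_neg_one]
  have hvar : ∫ t in (1 : ℝ)..Y, ‖-(I * τ) * (t : ℂ) ^ (-(I * τ) - 1)‖ = |τ| * Real.log Y := by
    rw [integral_congr hderiv_norm, intervalIntegral.integral_const_mul,
      integral_inv_of_pos one_pos (by linarith), div_one]
  have hu' : IntervalIntegrable (fun t : ℝ => -(I * τ) * (t : ℂ) ^ (-(I * τ) - 1)) volume 1 Y := by
    refine ContinuousOn.intervalIntegrable fun t ht => ?_
    exact (continuousAt_const.mul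
      (continuousAt_ofReal_cpow_const t _ (Or.inr (hpos t ht).ne'))).continuousWithinAt
  have := norm_integral_mul_exp_I_mul_le hY hγ
    (fun t ht => hasDerivAt_ofReal_cpow_const_of_pos _ (hpos t ht)) hu'
  rwa [hvar, norm_ofReal_cpow_neg_I_mul τ (by linarith), norm_ofReal_cpow_neg_I_mul τ one_pos,
    one_add_one_eq_two] at this

lemma norm_integral_cpow_mul_tsum_le (τ : ℝ) {a : ℕ → ℂ} (ha : Summable fun n => ‖a n‖)
    {γ : ℕ → ℝ} (hγ : ∀ n, 1 ≤ |γ n|) {Y : ℝ} (hY : 1 ≤ Y) :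
    ‖∫ t in (1 : ℝ)..Y, (t : ℂ) ^ (-(I * τ)) * ∑' n, a n * exp (I * γ n * t)‖
      ≤ (∑' n, ‖a n‖) * (2 + |τ| * Real.log Y) := by
  have hswap : HasSum (fun n => a n * ∫ t in (1 : ℝ)..Y, (t : ℂ) ^ (-(I * τ)) * exp (I * γ n * t))
      (∫ t in (1 : ℝ)..Y, (t : ℂ) ^ (-(I * τ)) * ∑' n, a n * exp (I * γ n * t)) := by
    simp_rw [← intervalIntegral.integral_const_mul]
    refine hasSum_integral_of_dominated_convergence (fun n _ => ‖a n‖)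
      (fun n => by fun_prop) (fun n => ?_) (ae_of_all _ fun _ _ => ha)
      intervalIntegrable_const (ae_of_all _ fun t ht => ?_)
    · refine ae_of_all _ fun t ht => le_of_eq ?_
      rw [uIoc_of_le hY] at ht
      rw [norm_mul, norm_mul, norm_ofReal_cpow_neg_I_mul τ (by linarith [ht.1]),
        norm_exp_I_mul_ofReal_mul_ofReal, one_mul, mul_one]
    · have hsum : Summable fun n => a n * exp (I * γ n * t) :=
        ha.of_norm_bounded fun n => by rw [norm_mul, norm_exp_I_mul_ofReal_mul_ofReal, mul_one]
      simpa only [mul_left_comm] using hsum.hasSum.mul_left ((t : ℂ) ^ (-(I * τ)))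
  refine hswap.norm_le_of_bounded (ha.hasSum.mul_right _) fun n => ?_
  rw [norm_mul]
  gcongr
  calc _ ≤ (2 + |τ| * Real.log Y) / |γ n| :=
        norm_integral_cpow_mul_exp_I_mul_le τ (abs_pos.1 (one_pos.trans_le (hγ n))) hY
    _ ≤ 2 + |τ| * Real.log Y :=
        div_le_self (by positivity [Real.log_nonneg hY]) (hγ n)

lemma tendsto_const_add_mul_log_div_atTop (A B : ℝ) :
    Tendsto (fun Y => (A + B * Real.log Y) / Y) atTop (nhds 0) := by
  have hlog := Real.isLittleO_log_id_atTop.tendsto_div_nhds_zero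
  have := (tendsto_inv_atTop_zero.const_mul A).add (hlog.const_mul B)
  simp only [mul_zero, add_zero] at this
  exact this.congr fun Y => by simp only [id]; ring

theorem twisted_trig_series_cesaro_cancellation_general
    (a : ℕ → ℂ) (ha : Summable fun n => ‖a n‖)
    (γ : ℕ → ℝ) (hγ1 : ∀ n : ℕ, 1 ≤ |γ n|)
    (f : ℝ → ℂ)
    (hf : ∀ t : ℝ, f t = ∑' n : ℕ, a n * Complex.exp (Complex.I * (γ n : ℂ) * (t : ℂ)))
    (τ : ℝ) :
    Filter.Tendsto
      (fun Y : ℝ => (1 / (Y : ℂ)) *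
        ∫ t in (1 : ℝ)..Y, ((t : ℂ) ^ (-(Complex.I * (τ : ℂ)))) * f t)
      Filter.atTop (nhds 0) := by
  obtain rfl : f = _ := funext hf
  have hbound := (tendsto_const_add_mul_log_div_atTop 2 |τ|).const_mul (∑' n, ‖a n‖)
  rw [mul_zero] at hbound
  refine squeeze_zero_norm' ?_ hbound
  filter_upwards [eventually_ge_atTop 1] with Y hY
  rw [norm_mul, norm_div, norm_one, norm_real, Real.norm_of_nonneg (by linarith), mul_div_assoc',
    one_div_mul_eq_div]
  exact div_le_div_of_nonneg_right (norm_integral_cpow_mul_tsum_le τ ha hγ1 hY) (by linarith)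

/-- If moreover `|γₙ| ≥ 1` for all `n`, then for every `τ ∈ ℝ` the
twisted long averages cancel: `(1/Y) ∫_1^Y t^{−iτ} f(t) dt → 0` as `Y → ∞`. -/
theorem twisted_trig_series_cesaro_cancellation
    (a : ℕ → ℂ) (ha : Summable fun n => ‖a n‖)
    (γ : ℕ → ℝ) (hγ : Function.Injective γ) (hγ1 : ∀ n : ℕ, 1 ≤ |γ n|)
    (f : ℝ → ℂ)
    (hf : ∀ t : ℝ, f t = ∑' n : ℕ, a n * Complex.exp (Complex.I * (γ n : ℂ) * (t : ℂ)))
    (τ : ℝ) :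
    Filter.Tendsto
      (fun Y : ℝ => (1 / (Y : ℂ)) *
        ∫ t in (1 : ℝ)..Y, ((t : ℂ) ^ (-(Complex.I * (τ : ℂ)))) * f t)
      Filter.atTop (nhds 0) :=
  twisted_trig_series_cesaro_cancellation_general a ha γ hγ1 f hf τ
end
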